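/- arXiv:1405.7508 — 6 statements merged into one kernel-verified Lean document; each statement's English description precedes it below -/
import Mathlib

section
/- In the n-dimensional hypercube graph Q_n (vertices are 0-1 vectors of length n, with Hamming distance as graph distance), for any unknown vertex u, the answers to the n-1+⌈log_2(n+1)⌉ ball queries consisting of B(0, r) for ⌈log_2(n+1)⌉ adaptively chosen radii r (binary search on d(0,u)) together with B(e_i, d-1) for i = 1,...,n-1 (where d = d(0,u) and e_i is the i-th standard basis vector) determine u uniquely. In particular A(Q_n) ≤ n - 1 + ⌈log_2(n+1)⌉. -/
/-- An adaptive ball-search strategy: a binary decision tree whose internal nodes query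
"is the unknown vertex in the ball of radius `r` about `c`?". -/
inductive BallTree (V : Type*) : Type _ where
  | leaf : V → BallTree V
  | node : V → ℕ → BallTree V → BallTree V → BallTree V

/-- The output of the strategy on unknown vertex `u`, for the metric `d`. -/
def BallTree.eval {V : Type*} (d : V → V → ℕ) : BallTree V → V → V
  | .leaf v, _ => v
  | .node c r tYes tNo, u => if d c u ≤ r then tYes.eval d u else tNo.eval d u

/-- The number of queries used in the worst case (depth of the tree). -/
def BallTree.depth {V : Type*} : BallTree V → ℕ
  | .leaf _ => 0
  | .node _ _ t₁ t₂ => max t₁.depth t₂.depth + 1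

/-!
Binary search over the radius of balls about `0` finds the weight `w = d(0, u)` with
`⌈log₂(n+1)⌉` queries, the possible weights being `0, …, n`. Knowing `w`, the unit vector `e_i`
satisfies `d(e_i, u) = w - 1` if `u_i = 1` and `w + 1` otherwise, so the ball `B(e_i, w - 1)`
reveals `u_i`. After the first `n - 1` coordinates the last one is forced by the weight.
-/

namespace BallTree

variable {V : Type*}

def ofQueries (decode : List Bool → V) : List (V × ℕ) → BallTree V
  | [] => leaf (decode [])
  | (c, r) :: qs => node c r (ofQueries (decode ∘ (true :: ·)) qs)
      (ofQueries (decode ∘ (false :: ·)) qs)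

theorem depth_ofQueries (decode : List Bool → V) (qs : List (V × ℕ)) :
    (ofQueries decode qs).depth = qs.length := by
  induction qs generalizing decode with
  | nil => rfl
  | cons q qs ih => simp [ofQueries, depth, ih]

theorem eval_ofQueries (d : V → V → ℕ) (decode : List Bool → V) (qs : List (V × ℕ)) (u : V) :
    (ofQueries decode qs).eval d u = decode (qs.map fun q => decide (d q.1 u ≤ q.2)) := by
  induction qs generalizing decode with
  | nil => rfl
  | cons q qs ih => by_cases h : d q.1 u ≤ q.2 <;> simp [ofQueries, eval, ih, h]

/-- Binary search for `d c u` in `[lo, lo + len]` with balls about `c`, continuing with the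
strategy `next (d c u)`. -/
def binarySearch (c : V) (next : ℕ → BallTree V) (lo : ℕ) : ℕ → BallTree V
  | 0 => next lo
  | len + 1 => node c (lo + (len + 1) / 2) (binarySearch c next lo ((len + 1) / 2))
      (binarySearch c next (lo + (len + 1) / 2 + 1) (len - (len + 1) / 2))

theorem eval_binarySearch (d : V → V → ℕ) (c : V) (next : ℕ → BallTree V) {u : V} :
    ∀ {lo len : ℕ}, lo ≤ d c u → d c u ≤ lo + len →
      (binarySearch c next lo len).eval d u = (next (d c u)).eval d u
  | lo, 0, hlo, hhi => by rw [binarySearch, show d c u = lo by omega]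
  | lo, len + 1, hlo, hhi => by
    rw [binarySearch, eval]
    split_ifs with h
    · exact eval_binarySearch d c next hlo h
    · exact eval_binarySearch d c next (by omega) (by omega)

theorem depth_binarySearch_le (c : V) {next : ℕ → BallTree V} {k : ℕ}
    (hnext : ∀ w, (next w).depth ≤ k) :
    ∀ lo len : ℕ, (binarySearch c next lo len).depth ≤ k + Nat.clog 2 (len + 1)
  | lo, 0 => by simpa [binarySearch] using hnext lo
  | lo, len + 1 => by
    have hyes := depth_binarySearch_le c hnext lo ((len + 1) / 2)
    have hno := depth_binarySearch_le c hnext (lo + (len + 1) / 2 + 1) (len - (len + 1) / 2)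
    have hmono : Nat.clog 2 (len - (len + 1) / 2 + 1) ≤ Nat.clog 2 ((len + 1) / 2 + 1) :=
      Nat.clog_mono_right 2 (by omega)
    have hhalve : Nat.clog 2 (len + 1 + 1) = Nat.clog 2 ((len + 1) / 2 + 1) + 1 := by
      rw [Nat.clog_of_two_le (by norm_num) (by omega)]
      congr 2
      omega
    simp only [binarySearch, depth]
    omega

end BallTree

section Hamming

variable {ι : Type*} [Fintype ι]

theorem hammingDist_const_false_left (u : ι → Bool) :
    hammingDist (fun _ => false) u = ∑ j, (u j).toNat := by
  rw [hammingDist, Finset.card_filter]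
  exact Finset.sum_congr rfl fun j _ => by cases u j <;> rfl

theorem hammingDist_decide_eq_left_add [DecidableEq ι] (u : ι → Bool) (i : ι) :
    hammingDist (fun j => decide (j = i)) u + 2 * (u i).toNat =
      hammingDist (fun _ => false) u + 1 := by
  simp only [hammingDist, Finset.card_filter]
  rw [← Finset.add_sum_erase _ _ (Finset.mem_univ i),
    ← Finset.add_sum_erase _ _ (Finset.mem_univ i),
    Finset.sum_congr rfl fun j hj => by rw [decide_eq_false (Finset.ne_of_mem_erase hj)]]
  cases u i <;> simp <;> omega

theorem hammingDist_decide_le_iff [DecidableEq ι] (u : ι → Bool) (i : ι) :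
    hammingDist (fun j => decide (j = i)) u ≤ hammingDist (fun _ => false) u - 1 ↔
      u i = true := by
  have h := hammingDist_decide_eq_left_add u i
  cases hu : u i <;> simp [hu] at h ⊢ <;> omega

end Hamming

namespace Hypercube

variable {m : ℕ}

def decode (w : ℕ) (answers : List Bool) : Fin (m + 1) → Bool :=
  let v : Fin m → Bool := fun i => answers.getD i false
  Fin.snoc v (decide (∑ i, (v i).toNat < w))

theorem decode_weight (u : Fin (m + 1) → Bool) :
    decode (∑ j, (u j).toNat) ((List.finRange m).map fun i => u i.castSucc) = u := by
  have hinit (i : Fin m) : ((List.finRange m).map fun i => u i.castSucc).getD i false =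
      u i.castSucc := by
    simp [List.getD_eq_getElem?_getD]
  have hlast : decide (∑ i : Fin m, (u i.castSucc).toNat < ∑ j, (u j).toNat) = u (Fin.last m) := by
    rw [Fin.sum_univ_castSucc]
    cases u (Fin.last m) <;> simp
  simp only [decode, hinit, hlast]
  exact Fin.snoc_init_self u

/-- `fun j => decide (j = i)` is the unit vector `e_i`. -/
def searchTree (m : ℕ) : BallTree (Fin (m + 1) → Bool) :=
  BallTree.binarySearch (fun _ => false)
    (fun w => BallTree.ofQueries (decode w)
      ((List.finRange m).map fun i => (fun j => decide (j = i.castSucc), w - 1)))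
    0 (m + 1)

theorem eval_searchTree (u : Fin (m + 1) → Bool) : (searchTree m).eval hammingDist u = u := by
  have hweight : hammingDist (fun _ => false) u ≤ 0 + (m + 1) := by
    simpa using hammingDist_le_card_fintype (x := fun _ => false) (y := u)
  rw [searchTree, BallTree.eval_binarySearch _ _ _ (Nat.zero_le _) hweight,
    BallTree.eval_ofQueries, List.map_map]
  simp only [Function.comp_def, hammingDist_decide_le_iff, Bool.decide_eq_true]
  rw [hammingDist_const_false_left]
  exact decode_weight u

theorem depth_searchTree_le (m : ℕ) : (searchTree m).depth ≤ m + Nat.clog 2 (m + 2) :=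
  BallTree.depth_binarySearch_le _ (fun w => by simp [BallTree.depth_ofQueries]) 0 (m + 1)

end Hypercube

/-- There is an adaptive strategy of length `n - 1 + ⌈log₂(n+1)⌉` determining an unknown
vertex of the hypercube `Q_n`: first binary-search the distance `d(0,u)` with
`⌈log₂(n+1)⌉` ball queries centered at `0`, then determine the first `n-1` coordinates
with the balls `B(e_i, d-1)`.  In particular `A(Q_n) ≤ n - 1 + ⌈log₂(n+1)⌉`. -/
theorem hypercube_adaptive_upper_bound (n : ℕ) :
    ∃ t : BallTree (Fin n → Bool),
      (∀ u : Fin n → Bool, t.eval hammingDist u = u) ∧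
      t.depth ≤ n - 1 + Nat.clog 2 (n + 1) := by
  cases n with
  | zero => exact ⟨.leaf isEmptyElim, fun u => Subsingleton.elim _ _, Nat.zero_le _⟩
  | succ m => exact ⟨Hypercube.searchTree m, Hypercube.eval_searchTree,
      by simpa using Hypercube.depth_searchTree_le m⟩
end

section
/- A(Q_n, ≤ r) ≤ K(n,r) + n - 1 + ⌈log_2(r+1)⌉, where K(n,r) is the minimum size of a radius-r covering code of Q_n. -/
/-- All radii queried by the strategy are at most `R`. -/
def BallTree.radiusLE {V : Type*} : BallTree V → ℕ → Prop
  | .leaf _, _ => True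
  | .node _ r t₁ t₂, R => r ≤ R ∧ t₁.radiusLE R ∧ t₂.radiusLE R

/-- `K(n,r)`: the minimum number of Hamming balls of radius `r` covering `Q_n`. -/
noncomputable def coveringNumber (n r : ℕ) : ℕ :=
  sInf {t : ℕ | ∃ C : Finset (Fin n → Bool), C.card = t ∧
    ∀ v : Fin n → Bool, ∃ c ∈ C, hammingDist c v ≤ r}

open Finset Function

section HammingUpdate

variable {ι : Type*} [Fintype ι] [DecidableEq ι] {β : ι → Type*} [∀ i, DecidableEq (β i)]

theorem hammingDist_update_of_eq {x y : ∀ i, β i} {i : ι} {b : β i} (hx : x i = y i)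
    (hb : b ≠ y i) : hammingDist (update x i b) y = hammingDist x y + 1 := by
  rw [hammingDist, hammingDist, ← card_insert_of_notMem (a := i) (by simp [hx])]
  congr 1
  ext j
  rcases eq_or_ne j i with rfl | hj <;> simp [*]

theorem hammingDist_update_self_add_one {x y : ∀ i, β i} {i : ι} (hx : x i ≠ y i) :
    hammingDist (update x i (y i)) y + 1 = hammingDist x y := by
  rw [hammingDist, hammingDist,
    ← card_erase_add_one (s := {j | x j ≠ y j}) (a := i) (by simp [hx])]
  congr 2
  ext j
  rcases eq_or_ne j i with rfl | hj <;> simp [*]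

end HammingUpdate

theorem hammingDist_update_not_le_iff {ι : Type*} [Fintype ι] [DecidableEq ι]
    {c u : ι → Bool} {ρ : ℕ} (h : hammingDist c u = ρ + 1) (i : ι) :
    hammingDist (update c i (!c i)) u ≤ ρ ↔ u i ≠ c i := by
  by_cases hi : c i = u i
  · have := hammingDist_update_of_eq hi (b := !c i) (by simp [← hi])
    exact ⟨fun _ => by omega, fun h => absurd hi.symm h⟩
  · have := hammingDist_update_self_add_one hi
    rw [← Bool.not_eq_iff.mpr hi] at this
    exact ⟨fun _ => Ne.symm hi, fun _ => by omega⟩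

theorem Nat.clog_two_succ_succ (w : ℕ) :
    Nat.clog 2 (w + 1 + 1) = Nat.clog 2 ((w + 1) / 2 + 1) + 1 := by
  rw [Nat.clog_of_two_le (by norm_num) (by omega)]
  congr 2
  omega

namespace BallTree

variable {V : Type*}

section Cover

def cover (r : ℕ) (k : V → BallTree V) : V → List V → BallTree V
  | c, [] => k c
  | c, c' :: cs => node c r (k c) (cover r k c' cs)

variable {r : ℕ} {k : V → BallTree V}

theorem radiusLE_cover {R : ℕ} (hr : r ≤ R) (hk : ∀ c, (k c).radiusLE R) (c : V)
    (cs : List V) :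
    (cover r k c cs).radiusLE R := by
  induction cs generalizing c with
  | nil => exact hk c
  | cons c' cs ih => exact ⟨hr, hk c, ih c'⟩

theorem depth_cover_le {D : ℕ} (hk : ∀ c, (k c).depth ≤ D) (c : V) (cs : List V) :
    (cover r k c cs).depth ≤ cs.length + D := by
  induction cs generalizing c with
  | nil => simpa [cover] using hk c
  | cons c' cs ih =>
    have := hk c
    have := ih c'
    simp only [cover, depth, List.length_cons]
    omega

theorem eval_cover {d : V → V → ℕ} {u : V} (hk : ∀ c, d c u ≤ r → (k c).eval d u = u)
    (c : V) (cs : List V) (hu : ∃ c' ∈ c :: cs, d c' u ≤ r) :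
    (cover r k c cs).eval d u = u := by
  induction cs generalizing c with
  | nil => simp_all [cover]
  | cons c' cs ih =>
    simp only [cover, eval]
    split_ifs with hc
    · exact hk c hc
    · refine ih c' ?_
      obtain ⟨c'', hc'', hd⟩ := hu
      rcases List.mem_cons.mp hc'' with rfl | hmem
      · exact absurd hd hc
      · exact ⟨c'', hmem, hd⟩

theorem exists_of_cover [Nonempty V] (d : V → V → ℕ) {R D : ℕ} (hr : r ≤ R) (C : Finset V)
    (hC : ∀ u, ∃ c ∈ C, d c u ≤ r) (hk_radius : ∀ c, (k c).radiusLE R)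
    (hk_depth : ∀ c, (k c).depth ≤ D) (hk_eval : ∀ c u, d c u ≤ r → (k c).eval d u = u) :
    ∃ t : BallTree V,
      t.radiusLE R ∧ (∀ u, t.eval d u = u) ∧ t.depth + 1 ≤ C.card + D := by
  obtain ⟨c, hc, -⟩ := hC (Classical.arbitrary V)
  obtain ⟨c₀, cs, hl⟩ :=
    List.exists_cons_of_ne_nil (mt Finset.toList_eq_nil.mp (Finset.ne_empty_of_mem hc))
  have hcard : C.card = cs.length + 1 := by rw [← Finset.length_toList, hl, List.length_cons]
  refine ⟨cover r k c₀ cs, radiusLE_cover hr hk_radius c₀ cs, fun u => ?_, ?_⟩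
  · obtain ⟨c', hc', hd⟩ := hC u
    exact eval_cover (hk_eval · u) c₀ cs ⟨c', hl ▸ Finset.mem_toList.mpr hc', hd⟩
  · have := depth_cover_le (r := r) hk_depth c₀ cs
    omega

end Cover

section Bisect

def bisect (c : V) (k : ℕ → BallTree V) : ℕ → ℕ → BallTree V
  | 0, lo => k lo
  | w + 1, lo => node c (lo + (w + 1) / 2)
      (bisect c k ((w + 1) / 2) lo)
      (bisect c k (w / 2) (lo + (w + 1) / 2 + 1))

variable {c : V} {k : ℕ → BallTree V}

theorem radiusLE_bisect {R : ℕ} (w lo : ℕ) (hR : lo + w ≤ R)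
    (hk : ∀ m ≤ lo + w, (k m).radiusLE R) : (bisect c k w lo).radiusLE R := by
  fun_induction bisect c k w lo with
  | case1 lo => exact hk lo (by omega)
  | case2 w lo ih₁ ih₂ =>
    exact ⟨by omega, ih₁ (by omega) (fun m hm => hk m (by omega)),
      ih₂ (by omega) (fun m hm => hk m (by omega))⟩

theorem depth_bisect_le {D : ℕ} (hk : ∀ m, (k m).depth ≤ D) (w lo : ℕ) :
    (bisect c k w lo).depth ≤ Nat.clog 2 (w + 1) + D := by
  fun_induction bisect c k w lo with
  | case1 lo => simpa using hk lo
  | case2 w lo ih₁ ih₂ =>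
    have hmono : Nat.clog 2 (w / 2 + 1) ≤ Nat.clog 2 ((w + 1) / 2 + 1) :=
      Nat.clog_mono_right 2 (by omega)
    have := Nat.clog_two_succ_succ w
    simp only [depth, Nat.succ_eq_add_one]
    omega

theorem eval_bisect {d : V → V → ℕ} {u : V} (w lo : ℕ) (h₁ : lo ≤ d c u)
    (h₂ : d c u ≤ lo + w) :
    (bisect c k w lo).eval d u = (k (d c u)).eval d u := by
  fun_induction bisect c k w lo with
  | case1 lo => rw [show d c u = lo by omega]
  | case2 w lo ih₁ ih₂ =>
    simp only [eval]
    split_ifs with hc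
    · exact ih₁ h₁ hc
    · exact ih₂ (by omega) (by omega)

end Bisect

section Hypercube

variable {ι : Type*} [DecidableEq ι]

/-- `w` accumulates the bits of the unknown vertex read so far. -/
def readBits (c : ι → Bool) (ρ : ℕ) : List ι → (ι → Bool) → BallTree (ι → Bool)
  | [], w => leaf w
  | i :: is, w => node (update c i (!c i)) ρ
      (readBits c ρ is (update w i (!c i)))
      (readBits c ρ is (update w i (c i)))

theorem radiusLE_readBits {c : ι → Bool} {ρ R : ℕ} (hρ : ρ ≤ R) (is : List ι)
    (w : ι → Bool) :
    (readBits c ρ is w).radiusLE R := by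
  induction is generalizing w with
  | nil => trivial
  | cons i is ih => exact ⟨hρ, ih _, ih _⟩

theorem depth_readBits_le (c : ι → Bool) (ρ : ℕ) (is : List ι) (w : ι → Bool) :
    (readBits c ρ is w).depth ≤ is.length := by
  induction is generalizing w with
  | nil => simp [readBits, depth]
  | cons i is ih =>
    have := ih (update w i (!c i))
    have := ih (update w i (c i))
    simp only [readBits, depth, List.length_cons]
    omega

variable [Fintype ι]

theorem eval_readBits {c u : ι → Bool} {ρ : ℕ} (h : hammingDist c u = ρ + 1) (is : List ι)
    (w : ι → Bool) (hw : ∀ j ∉ is, w j = u j) :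
    (readBits c ρ is w).eval hammingDist u = u := by
  induction is generalizing w with
  | nil => exact funext fun j => hw j List.not_mem_nil
  | cons i is ih =>
    have hw' : ∀ j ∉ is, update w i (u i) j = u j := fun j hj => by
      rcases eq_or_ne j i with rfl | hji
      · exact update_self ..
      · rw [update_of_ne hji]
        exact hw j (by simp [hji, hj])
    simp only [readBits, eval, hammingDist_update_not_le_iff h]
    split_ifs with hi
    · rw [Bool.not_eq_iff.mpr hi.symm]
      exact ih _ hw'
    · rw [(not_not.mp hi).symm]
      exact ih _ hw'

noncomputable def ofDist (c : ι → Bool) : ℕ → BallTree (ι → Bool)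
  | 0 => leaf c
  | ρ + 1 => readBits c ρ Finset.univ.toList c

theorem radiusLE_ofDist (c : ι → Bool) {m R : ℕ} (hm : m ≤ R + 1) :
    (ofDist c m).radiusLE R := by
  cases m with
  | zero => trivial
  | succ ρ => exact radiusLE_readBits (by omega) _ _

theorem depth_ofDist_le (c : ι → Bool) (m : ℕ) : (ofDist c m).depth ≤ Fintype.card ι := by
  cases m with
  | zero => exact Nat.zero_le _
  | succ ρ => simpa [ofDist] using depth_readBits_le c ρ Finset.univ.toList c

theorem eval_ofDist (c u : ι → Bool) : (ofDist c (hammingDist c u)).eval hammingDist u = u := by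
  cases h : hammingDist c u with
  | zero => exact hammingDist_eq_zero.mp h
  | succ ρ => exact eval_readBits h _ c fun j hj => absurd (mem_toList.mpr (mem_univ j)) hj

noncomputable def ofBall (c : ι → Bool) (r : ℕ) : BallTree (ι → Bool) :=
  bisect c (ofDist c) r 0

theorem radiusLE_ofBall (c : ι → Bool) (r : ℕ) : (ofBall c r).radiusLE r :=
  radiusLE_bisect r 0 (by omega) fun _ hm => radiusLE_ofDist c (by omega)

theorem depth_ofBall_le (c : ι → Bool) (r : ℕ) :
    (ofBall c r).depth ≤ Nat.clog 2 (r + 1) + Fintype.card ι :=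
  depth_bisect_le (depth_ofDist_le c) r 0

theorem eval_ofBall {c u : ι → Bool} {r : ℕ} (h : hammingDist c u ≤ r) :
    (ofBall c r).eval hammingDist u = u := by
  rw [ofBall, eval_bisect r 0 (Nat.zero_le _) (by omega), eval_ofDist]

end Hypercube

end BallTree

theorem exists_card_eq_coveringNumber (n r : ℕ) :
    ∃ C : Finset (Fin n → Bool), C.card = coveringNumber n r ∧
      ∀ v, ∃ c ∈ C, hammingDist c v ≤ r :=
  Nat.sInf_mem (s := {t | ∃ C : Finset (Fin n → Bool), C.card = t ∧
    ∀ v : Fin n → Bool, ∃ c ∈ C, hammingDist c v ≤ r})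
    ⟨_, univ, rfl, fun v => ⟨v, mem_univ v, hammingDist_self v ▸ Nat.zero_le r⟩⟩

/-- `A(Q_n, ≤ r) ≤ K(n,r) + n - 1 + ⌈log₂(r+1)⌉`: there is an adaptive strategy on `Q_n`
using balls of radius at most `r` of length `K(n,r) + n - 1 + ⌈log₂(r+1)⌉`. -/
theorem hypercube_adaptive_bounded_radius_upper_bound (n r : ℕ) :
    ∃ t : BallTree (Fin n → Bool),
      t.radiusLE r ∧
      (∀ u : Fin n → Bool, t.eval hammingDist u = u) ∧
      t.depth ≤ coveringNumber n r + n - 1 + Nat.clog 2 (r + 1) := by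
  obtain ⟨C, hC, hcover⟩ := exists_card_eq_coveringNumber n r
  obtain ⟨t, ht_radius, ht_eval, ht_depth⟩ :=
    BallTree.exists_of_cover hammingDist le_rfl C hcover (BallTree.radiusLE_ofBall · r)
      (BallTree.depth_ofBall_le · r) fun _ _ => BallTree.eval_ofBall
  refine ⟨t, ht_radius, ht_eval, ?_⟩
  rw [Fintype.card_fin] at ht_depth
  omega
end

section
/- Let G be a connected graph on n vertices with maximum degree at most Δ. For every subset X of V(G) with |X| ≥ Δ + 2 there exists a vertex v ∈ V(G) and a natural number r such that (1/(Δ+2))|X| ≤ |B(v,r) ∩ X| ≤ ((Δ+1)/(Δ+2))|X|, where B(v,r) is the ball of radius r around v in the graph metric. -/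
/-!
Call a ball `B(v, r)` big if it contains at least `(Δ+1)/(Δ+2)` of the points of `X`. Balls of
radius `|V|` contain all of `X`, so big balls exist; take one, `B(w, r)`, whose radius is least
among all big balls with any centre. Since `X` has two points and `G` is connected, `Δ ≥ 1`, so
with `|X| ≥ Δ + 2` a single point is not big and `r ≥ 1`. Now `B(w, r)` is covered by the at most
`Δ + 1` balls `B(u, r - 1)` with `u = w` or `u ~ w`, so one of them contains at least `|X|/(Δ+2)`
points of `X`, while it is not big by the minimality of `r`.
-/

open Finset

namespace SimpleGraph

variable {V : Type*} {G : SimpleGraph V}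

theorem Connected.dist_lt_card [Fintype V] (hconn : G.Connected) (u v : V) :
    G.dist u v < Fintype.card V := by
  obtain ⟨p, hp, hlen⟩ := hconn.exists_path_of_dist u v
  exact hlen ▸ hp.length_lt

theorem Connected.card_filter_dist_le_zero (hconn : G.Connected) (X : Finset V) (v : V) :
    #{x ∈ X | G.dist v x ≤ 0} ≤ 1 := by
  refine card_le_one.mpr fun x hx y hy => ?_
  simp only [mem_filter, Nat.le_zero, hconn.dist_eq_zero_iff] at hx hy
  exact hx.2.symm.trans hy.2

theorem Connected.exists_eq_or_adj_dist_le (hconn : G.Connected) {w x : V} {r : ℕ}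
    (h : G.dist w x ≤ r + 1) : ∃ u, (u = w ∨ G.Adj w u) ∧ G.dist u x ≤ r := by
  by_cases hr : G.dist w x ≤ r
  · exact ⟨w, Or.inl rfl, hr⟩
  obtain ⟨p, hp⟩ := hconn.exists_walk_length_eq_dist w x
  cases p with
  | nil => simp at hr
  | cons hadj q =>
    rw [Walk.length_cons] at hp
    exact ⟨_, Or.inr hadj, (dist_le q).trans (by omega)⟩

theorem Connected.card_filter_dist_le_succ_le_sum [DecidableEq V] [G.LocallyFinite]
    (hconn : G.Connected) (X : Finset V) (w : V) (r : ℕ) :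
    #{x ∈ X | G.dist w x ≤ r + 1} ≤
      ∑ u ∈ insert w (G.neighborFinset w), #{x ∈ X | G.dist u x ≤ r} := by
  refine (card_le_card fun x hx => ?_).trans card_biUnion_le
  rw [mem_filter] at hx
  obtain ⟨u, hu, hux⟩ := hconn.exists_eq_or_adj_dist_le hx.2
  exact mem_biUnion.mpr ⟨u, by simpa using hu, mem_filter.mpr ⟨hx.1, hux⟩⟩

theorem Connected.exists_le_mul_card_filter_dist_le [G.LocallyFinite] (hconn : G.Connected)
    (X : Finset V) {Δ : ℕ} {w : V} (hdeg : G.degree w ≤ Δ) {r c d : ℕ}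
    (h : (Δ + 1) * c ≤ d * #{x ∈ X | G.dist w x ≤ r + 1}) :
    ∃ u, c ≤ d * #{x ∈ X | G.dist u x ≤ r} := by
  classical
  have hN : #(insert w (G.neighborFinset w)) ≤ Δ + 1 :=
    (card_insert_le _ _).trans (by simpa using hdeg)
  obtain ⟨u, -, hu⟩ := exists_le_of_sum_le (insert_nonempty w (G.neighborFinset w))
    (f := fun _ => c) (g := fun u => d * #{x ∈ X | G.dist u x ≤ r}) <| calc
      ∑ _ ∈ insert w (G.neighborFinset w), c ≤ (Δ + 1) * c := by
        rw [sum_const, smul_eq_mul]; gcongr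
      _ ≤ d * #{x ∈ X | G.dist w x ≤ r + 1} := h
      _ ≤ ∑ u ∈ insert w (G.neighborFinset w), d * #{x ∈ X | G.dist u x ≤ r} := by
        rw [← mul_sum]; gcongr; exact hconn.card_filter_dist_le_succ_le_sum X w r
  exact ⟨u, hu⟩

end SimpleGraph

theorem balanced_ball_lemma_general {V : Type*} [Fintype V]
    (G : SimpleGraph V) [DecidableRel G.Adj] (Δ : ℕ)
    (hconn : G.Connected) (hdeg : ∀ v : V, G.degree v ≤ Δ)
    (X : Finset V) (hX : Δ + 2 ≤ X.card) :
    ∃ (v : V) (r : ℕ),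
      (X.card : ℝ) / (Δ + 2) ≤ ((X.filter (fun x => G.dist v x ≤ r)).card : ℝ) ∧
      ((X.filter (fun x => G.dist v x ≤ r)).card : ℝ) ≤
        ((Δ : ℝ) + 1) / (Δ + 2) * X.card := by
  set n := #X
  let IsBig (v : V) (r : ℕ) : Prop := (Δ + 1) * n ≤ (Δ + 2) * #{x ∈ X | G.dist v x ≤ r}
  obtain ⟨x₀, -, y₀, -, hne⟩ := one_lt_card.mp (by omega : 1 < n)
  have hΔ : 0 < Δ := ((hconn x₀ y₀).degree_pos_left hne).trans_le (hdeg x₀)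
  have hbig : ∃ r, ∃ v, IsBig v r := ⟨Fintype.card V, x₀, by
    simp only [IsBig, filter_true_of_mem fun x _ => (hconn.dist_lt_card x₀ x).le]; nlinarith⟩
  obtain ⟨w, hw⟩ := Nat.find_spec hbig
  have hmin : ∀ s < Nat.find hbig, ∀ u, ¬IsBig u s :=
    fun s hs u hu => Nat.find_min hbig hs ⟨u, hu⟩
  obtain ⟨s, hs⟩ : ∃ s, Nat.find hbig = s + 1 := Nat.exists_eq_succ_of_ne_zero fun h0 => by
    have := hconn.card_filter_dist_le_zero X w
    simp only [IsBig, h0] at hw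
    nlinarith
  rw [hs] at hw hmin
  obtain ⟨u, hlow⟩ := hconn.exists_le_mul_card_filter_dist_le X (hdeg w) hw
  have hhigh : ¬IsBig u s := hmin s s.lt_succ_self u
  simp only [IsBig, not_le] at hhigh
  refine ⟨u, s, ?_, ?_⟩
  · rw [div_le_iff₀ (by positivity)]
    exact_mod_cast (by linarith : n ≤ #{x ∈ X | G.dist u x ≤ s} * (Δ + 2))
  · rw [div_mul_eq_mul_div, le_div_iff₀ (by positivity)]
    exact_mod_cast (by linarith : #{x ∈ X | G.dist u x ≤ s} * (Δ + 2) ≤ (Δ + 1) * n)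

/-- Balanced-ball lemma: in a connected graph `G` of maximum degree at most `Δ`, for every
vertex set `X` with `|X| ≥ Δ + 2` there are a vertex `v` and a radius `r` with
`|X|/(Δ+2) ≤ |B(v,r) ∩ X| ≤ ((Δ+1)/(Δ+2))|X|`. -/
theorem balanced_ball_lemma {V : Type*} [Fintype V] [DecidableEq V]
    (G : SimpleGraph V) [DecidableRel G.Adj] (Δ : ℕ)
    (hconn : G.Connected) (hdeg : ∀ v : V, G.degree v ≤ Δ)
    (X : Finset V) (hX : Δ + 2 ≤ X.card) :
    ∃ (v : V) (r : ℕ),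
      (X.card : ℝ) / (Δ + 2) ≤ ((X.filter (fun x => G.dist v x ≤ r)).card : ℝ) ∧
      ((X.filter (fun x => G.dist v x ≤ r)).card : ℝ) ≤
        ((Δ : ℝ) + 1) / (Δ + 2) * X.card :=
  balanced_ball_lemma_general G Δ hconn hdeg X hX
end

section
/- For every connected graph G on n vertices with maximum degree at most Δ, the minimum number of adaptive ball queries needed to determine an unknown vertex satisfies A(G) ≤ log_{(Δ+3)/(Δ+2)} n + Δ + 1. Combined with the trivial lower bound A(G) ≥ log_2 n, this gives A(G) = Θ_Δ(log n). -/
open Finset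

namespace BallTree

variable {V : Type*}

def leaves [DecidableEq V] : BallTree V → Finset V
  | .leaf v => {v}
  | .node _ _ t₁ t₂ => t₁.leaves ∪ t₂.leaves

theorem eval_mem_leaves [DecidableEq V] (d : V → V → ℕ) :
    ∀ (t : BallTree V) (u : V), t.eval d u ∈ t.leaves
  | .leaf v, u => by simp [eval, leaves]
  | .node c r t₁ t₂, u => by
    rw [eval, leaves, mem_union]
    split
    · exact Or.inl (eval_mem_leaves d t₁ u)
    · exact Or.inr (eval_mem_leaves d t₂ u)

theorem card_leaves_le_two_pow_depth [DecidableEq V] :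
    ∀ t : BallTree V, #t.leaves ≤ 2 ^ t.depth
  | .leaf v => by simp [leaves, depth]
  | .node c r t₁ t₂ => by
    have h₁ : 2 ^ t₁.depth ≤ 2 ^ max t₁.depth t₂.depth :=
      Nat.pow_le_pow_right two_pos (le_max_left _ _)
    have h₂ : 2 ^ t₂.depth ≤ 2 ^ max t₁.depth t₂.depth :=
      Nat.pow_le_pow_right two_pos (le_max_right _ _)
    calc #(t₁.leaves ∪ t₂.leaves) ≤ #t₁.leaves + #t₂.leaves := card_union_le _ _
      _ ≤ 2 ^ max t₁.depth t₂.depth + 2 ^ max t₁.depth t₂.depth :=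
          add_le_add ((card_leaves_le_two_pow_depth t₁).trans h₁)
            ((card_leaves_le_two_pow_depth t₂).trans h₂)
      _ = 2 ^ (max t₁.depth t₂.depth + 1) := by ring

theorem card_le_two_pow_depth [Fintype V] [DecidableEq V] (d : V → V → ℕ) (t : BallTree V)
    (ht : ∀ u, t.eval d u = u) : Fintype.card V ≤ 2 ^ t.depth := by
  have huniv : (univ : Finset V) ⊆ t.leaves := fun u _ => ht u ▸ t.eval_mem_leaves d u
  exact (card_le_card huniv).trans t.card_leaves_le_two_pow_depth

theorem logb_two_card_le_depth [Fintype V] [DecidableEq V] (d : V → V → ℕ) (t : BallTree V)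
    (ht : ∀ u, t.eval d u = u) : Real.logb 2 (Fintype.card V) ≤ t.depth := by
  rcases (Fintype.card V).eq_zero_or_pos with hV | hV
  · simp [hV]
  · rw [Real.logb_le_iff_le_rpow one_lt_two (by exact_mod_cast hV), Real.rpow_natCast]
    exact_mod_cast card_le_two_pow_depth d t ht

theorem exists_depth_le_of_forall_split [Nonempty V] (d : V → V → ℕ) {p q : ℕ} (hq : 0 < q)
    (hsplit : ∀ S : Finset V, 2 ≤ #S → ∃ v r,
      q * #{u ∈ S | d v u ≤ r} ≤ p * #S ∧ q * #{u ∈ S | ¬d v u ≤ r} ≤ p * #S) :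
    ∀ (m : ℕ) (S : Finset V), #S * p ^ m ≤ q ^ m →
      ∃ t : BallTree V, (∀ u ∈ S, t.eval d u = u) ∧ t.depth ≤ m := by
  have leaf_of_card_le_one : ∀ S : Finset V, #S ≤ 1 →
      ∃ t : BallTree V, (∀ u ∈ S, t.eval d u = u) ∧ t.depth = 0 := by
    intro S hS
    obtain ⟨a, ha⟩ := card_le_one_iff_subset_singleton.mp hS
    exact ⟨.leaf a, fun u hu => (mem_singleton.mp (ha hu)).symm, rfl⟩
  intro m
  induction m with
  | zero =>
    intro S hS
    obtain ⟨t, ht, hdepth⟩ := leaf_of_card_le_one S (by simpa using hS)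
    exact ⟨t, ht, hdepth.le⟩
  | succ m ih =>
    intro S hS
    by_cases hsmall : #S ≤ 1
    · obtain ⟨t, ht, hdepth⟩ := leaf_of_card_le_one S hsmall
      exact ⟨t, ht, by omega⟩
    obtain ⟨v, r, hin, hout⟩ := hsplit S (by omega)
    have shrink : ∀ T : Finset V, q * #T ≤ p * #S → #T * p ^ m ≤ q ^ m := by
      intro T hT
      refine Nat.le_of_mul_le_mul_left ?_ hq
      calc q * (#T * p ^ m) = q * #T * p ^ m := by ring
        _ ≤ p * #S * p ^ m := Nat.mul_le_mul_right _ hT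
        _ = #S * p ^ (m + 1) := by ring
        _ ≤ q ^ (m + 1) := hS
        _ = q * q ^ m := by ring
    obtain ⟨tIn, htIn, hdIn⟩ := ih _ (shrink _ hin)
    obtain ⟨tOut, htOut, hdOut⟩ := ih _ (shrink _ hout)
    refine ⟨.node v r tIn tOut, fun u hu => ?_, by simp only [depth]; omega⟩
    rw [eval]
    split_ifs with h
    · exact htIn u (mem_filter.mpr ⟨hu, h⟩)
    · exact htOut u (mem_filter.mpr ⟨hu, h⟩)

end BallTree

namespace SimpleGraph

variable {V : Type*} [Fintype V] [DecidableEq V] (G : SimpleGraph V) [DecidableRel G.Adj]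

theorem exists_mem_insert_neighborFinset_dist_le {v u : V} {r : ℕ} (h : G.dist v u ≤ r + 1) :
    ∃ w ∈ insert v (G.neighborFinset v), G.dist w u ≤ r := by
  by_cases hr : G.dist v u ≤ r
  · exact ⟨v, mem_insert_self _ _, hr⟩
  obtain ⟨p, hp⟩ := exists_walk_of_dist_ne_zero (show G.dist v u ≠ 0 by omega)
  cases p with
  | nil => simp at hr
  | cons hadj q =>
    refine ⟨_, mem_insert_of_mem ((mem_neighborFinset _ _ _).mpr hadj), ?_⟩
    have := dist_le q
    simp only [Walk.length_cons] at hp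
    omega

theorem exists_card_ball_succ_le {Δ : ℕ} (hdeg : ∀ v, G.degree v ≤ Δ) (S : Finset V) (v : V)
    (r : ℕ) : ∃ w, #{u ∈ S | G.dist v u ≤ r + 1} ≤ (Δ + 1) * #{u ∈ S | G.dist w u ≤ r} := by
  set N := insert v (G.neighborFinset v)
  obtain ⟨w, -, hw⟩ := N.exists_max_image (fun w => #{u ∈ S | G.dist w u ≤ r}) ⟨v, mem_insert_self _ _⟩
  have hN : #N ≤ Δ + 1 :=
    (card_insert_le _ _).trans (by rw [card_neighborFinset_eq_degree]; exact Nat.succ_le_succ (hdeg v))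
  have hcover : {u ∈ S | G.dist v u ≤ r + 1} ⊆ N.biUnion fun w => {u ∈ S | G.dist w u ≤ r} := by
    intro u hu
    rw [mem_filter] at hu
    obtain ⟨w', hw'N, hw'u⟩ := G.exists_mem_insert_neighborFinset_dist_le hu.2
    exact mem_biUnion.mpr ⟨w', hw'N, mem_filter.mpr ⟨hu.1, hw'u⟩⟩
  refine ⟨w, (card_le_card hcover).trans ?_⟩
  exact (card_biUnion_le_card_mul _ _ _ hw).trans (Nat.mul_le_mul_right _ hN)

theorem exists_balanced_ball_of_large_ball (hconn : G.Connected) {Δ : ℕ}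
    (hdeg : ∀ v, G.degree v ≤ Δ) {S : Finset V} (hS : 2 ≤ #S) :
    ∀ r v, (Δ + 1) * #S < (Δ + 2) * #{u ∈ S | G.dist v u ≤ r} →
      ∃ w r', #S < (Δ + 2) * #{u ∈ S | G.dist w u ≤ r'} ∧
        (Δ + 2) * #{u ∈ S | G.dist w u ≤ r'} ≤ (Δ + 1) * #S := by
  intro r
  induction r with
  | zero =>
    intro v hv
    have hsub : {u ∈ S | G.dist v u ≤ 0} ⊆ {v} := fun u hu =>
      mem_singleton.mpr (hconn.dist_eq_zero_iff.mp (Nat.le_zero.mp (mem_filter.mp hu).2)).symm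
    have hle := (card_le_card hsub).trans (card_singleton v).le
    nlinarith
  | succ r ih =>
    intro v hv
    obtain ⟨w, hw⟩ := G.exists_card_ball_succ_le hdeg S v r
    have hlarge : #S < (Δ + 2) * #{u ∈ S | G.dist w u ≤ r} := by
      refine Nat.lt_of_mul_lt_mul_left (a := Δ + 1) ?_
      calc (Δ + 1) * #S < (Δ + 2) * #{u ∈ S | G.dist v u ≤ r + 1} := hv
        _ ≤ (Δ + 2) * ((Δ + 1) * #{u ∈ S | G.dist w u ≤ r}) := Nat.mul_le_mul_left _ hw
        _ = (Δ + 1) * ((Δ + 2) * #{u ∈ S | G.dist w u ≤ r}) := by ring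
    rcases le_or_gt ((Δ + 2) * #{u ∈ S | G.dist w u ≤ r}) ((Δ + 1) * #S) with hle | hgt
    · exact ⟨w, r, hlarge, hle⟩
    · exact ih w hgt

theorem exists_ball_split (hconn : G.Connected) {Δ : ℕ} (hdeg : ∀ v, G.degree v ≤ Δ)
    {S : Finset V} (hS : 2 ≤ #S) : ∃ v r,
      (Δ + 3) * #{u ∈ S | G.dist v u ≤ r} ≤ (Δ + 2) * #S ∧
        (Δ + 3) * #{u ∈ S | ¬G.dist v u ≤ r} ≤ (Δ + 2) * #S := by
  obtain ⟨v, -⟩ := card_pos.mp (by omega : 0 < #S)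
  have hall : {u ∈ S | G.dist v u ≤ S.sup (G.dist v)} = S :=
    filter_true_of_mem fun u hu => le_sup (f := G.dist v) hu
  obtain ⟨w, r, hlo, hhi⟩ := G.exists_balanced_ball_of_large_ball hconn hdeg hS _ v
    (by rw [hall]; nlinarith)
  have hsum := card_filter_add_card_filter_not (s := S) (fun u => G.dist w u ≤ r)
  have hin := card_filter_le S (fun u => G.dist w u ≤ r)
  exact ⟨w, r, by nlinarith, by nlinarith⟩

theorem exists_ballTree_depth_le_logb (hconn : G.Connected) {Δ : ℕ}
    (hdeg : ∀ v, G.degree v ≤ Δ) : ∃ t : BallTree V, (∀ u, t.eval G.dist u = u) ∧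
      (t.depth : ℝ) ≤ Real.logb ((Δ + 3 : ℝ) / (Δ + 2)) (Fintype.card V) + 1 := by
  have := hconn.nonempty
  have hρ : 1 < (Δ + 3 : ℝ) / (Δ + 2) := by rw [one_lt_div (by positivity)]; linarith
  obtain ⟨j, hj_le, hj_lt⟩ := exists_nat_pow_near (x := (Fintype.card V : ℝ))
    (Nat.one_le_cast.mpr Fintype.card_pos) hρ
  have hcard : Fintype.card V * (Δ + 2) ^ (j + 1) ≤ (Δ + 3) ^ (j + 1) := by
    rw [div_pow, lt_div_iff₀ (by positivity)] at hj_lt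
    exact_mod_cast hj_lt.le
  obtain ⟨t, ht, hdepth⟩ := BallTree.exists_depth_le_of_forall_split G.dist (by omega)
    (fun S hS => G.exists_ball_split hconn hdeg hS) (j + 1) univ (by simpa using hcard)
  have hj : (j : ℝ) ≤ Real.logb ((Δ + 3 : ℝ) / (Δ + 2)) (Fintype.card V) := by
    rwa [Real.le_logb_iff_rpow_le hρ (by exact_mod_cast Fintype.card_pos), Real.rpow_natCast]
  refine ⟨t, fun u => ht u (mem_univ u), ?_⟩
  have : (t.depth : ℝ) ≤ j + 1 := by exact_mod_cast hdepth
  linarith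

end SimpleGraph

/-- For a connected graph `G` on `n` vertices with maximum degree at most `Δ`,
`log₂ n ≤ A(G) ≤ log_{(Δ+3)/(Δ+2)} n + Δ + 1`; in particular `A(G) = Θ_Δ(log n)`. -/
theorem adaptive_search_bounded_degree {V : Type*} [Fintype V] [DecidableEq V]
    (G : SimpleGraph V) [DecidableRel G.Adj] (Δ : ℕ)
    (hconn : G.Connected) (hdeg : ∀ v : V, G.degree v ≤ Δ) :
    (∃ t : BallTree V, (∀ u : V, t.eval G.dist u = u) ∧
      (t.depth : ℝ) ≤
        Real.logb ((Δ + 3 : ℝ) / (Δ + 2)) (Fintype.card V) + Δ + 1) ∧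
    (∀ t : BallTree V, (∀ u : V, t.eval G.dist u = u) →
      Real.logb 2 (Fintype.card V) ≤ (t.depth : ℝ)) := by
  obtain ⟨t, ht, hdepth⟩ := G.exists_ballTree_depth_le_logb hconn hdeg
  have hΔ : (0 : ℝ) ≤ Δ := Nat.cast_nonneg Δ
  exact ⟨⟨t, ht, by linarith⟩, fun t ht => t.logb_two_card_le_depth G.dist ht⟩
end

section
/- For any connected graph G, the metric dimension β(G) satisfies β(G) ≤ M(G) ≤ diam(G) · β(G), where M(G) is the minimum size of a family of balls in G separating all pairs of vertices. -/
/-!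
The centres of a separating family of balls resolve the graph: if `B(z, r)` contains exactly one
of `x, y`, then `d(z, x) ≠ d(z, y)`. Conversely, if `z` resolves `x, y` with `d(x, z) < d(y, z)`,
then the ball `B(z, d(x, z))` separates them, and its radius is below the diameter; so the
`diam(G) · |D|` balls `B(d, r)`, `d ∈ D`, `r < diam(G)`, separate whenever `D` resolves.
-/

namespace SimpleGraph

open Finset

variable {V : Type*} (G : SimpleGraph V)

def IsResolving (D : Finset V) : Prop :=
  ∀ x y : V, x ≠ y → ∃ z ∈ D, G.dist x z ≠ G.dist y z

/-- A pair `(v, r)` stands for the ball `B(v, r)`. -/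
def IsBallSeparating (Q : Finset (V × ℕ)) : Prop :=
  ∀ x y : V, x ≠ y → ∃ p ∈ Q, (G.dist p.1 x ≤ p.2 ↔ ¬ G.dist p.1 y ≤ p.2)

variable {G}

theorem IsBallSeparating.isResolving_image_fst [DecidableEq V] {Q : Finset (V × ℕ)}
    (hQ : G.IsBallSeparating Q) : G.IsResolving (Q.image Prod.fst) := by
  intro x y hxy
  obtain ⟨p, hp, hsep⟩ := hQ x y hxy
  refine ⟨p.1, mem_image_of_mem _ hp, fun h => ?_⟩
  rw [G.dist_comm, h, G.dist_comm] at hsep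
  exact iff_not_self hsep

theorem IsResolving.isBallSeparating_product_range {D : Finset V} {m : ℕ}
    (hD : G.IsResolving D) (hm : ∀ x y, G.dist x y ≤ m) :
    G.IsBallSeparating (D ×ˢ range m) := by
  intro x y hxy
  obtain ⟨z, hz, hne⟩ := hD x y hxy
  rw [G.dist_comm, G.dist_comm (u := y)] at hne
  rcases hne.lt_or_gt with hlt | hlt
  · exact ⟨(z, G.dist z x), mem_product.2 ⟨hz, mem_range.2 (hlt.trans_le (hm z y))⟩,
      by simp [hlt]⟩
  · exact ⟨(z, G.dist z y), mem_product.2 ⟨hz, mem_range.2 (hlt.trans_le (hm z x))⟩,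
      by simpa using hlt⟩

theorem Preconnected.isResolving_univ [Fintype V] (hG : G.Preconnected) :
    G.IsResolving univ :=
  fun x y hxy => ⟨x, mem_univ x, by
    rw [dist_self, ne_comm, Ne, (hG y x).dist_eq_zero_iff]
    exact hxy.symm⟩

end SimpleGraph

/-- For a finite connected graph `G`, the metric dimension `β(G)` and the minimum size
`M(G)` of a separating family of balls satisfy `β(G) ≤ M(G) ≤ diam(G) · β(G)`. -/
theorem metric_dimension_vs_ball_separation {V : Type*} [Fintype V] [DecidableEq V]
    (G : SimpleGraph V) (hconn : G.Connected) :
    sInf {k : ℕ | ∃ D : Finset V, D.card = k ∧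
        ∀ x y : V, x ≠ y → ∃ z ∈ D, G.dist x z ≠ G.dist y z} ≤
      sInf {t : ℕ | ∃ Q : Finset (V × ℕ), Q.card = t ∧
        ∀ x y : V, x ≠ y → ∃ p ∈ Q, (G.dist p.1 x ≤ p.2 ↔ ¬ G.dist p.1 y ≤ p.2)} ∧
    sInf {t : ℕ | ∃ Q : Finset (V × ℕ), Q.card = t ∧
        ∀ x y : V, x ≠ y → ∃ p ∈ Q, (G.dist p.1 x ≤ p.2 ↔ ¬ G.dist p.1 y ≤ p.2)} ≤
      (Finset.univ.sup fun p : V × V => G.dist p.1 p.2) *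
        sInf {k : ℕ | ∃ D : Finset V, D.card = k ∧
          ∀ x y : V, x ≠ y → ∃ z ∈ D, G.dist x z ≠ G.dist y z} := by
  change sInf {k | ∃ D, D.card = k ∧ G.IsResolving D} ≤
      sInf {t | ∃ Q, Q.card = t ∧ G.IsBallSeparating Q} ∧
    sInf {t | ∃ Q, Q.card = t ∧ G.IsBallSeparating Q} ≤
      (Finset.univ.sup fun p : V × V => G.dist p.1 p.2) *
        sInf {k | ∃ D, D.card = k ∧ G.IsResolving D}
  set diam := Finset.univ.sup fun p : V × V => G.dist p.1 p.2
  have hdiam (x y : V) : G.dist x y ≤ diam :=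
    Finset.le_sup (f := fun p : V × V => G.dist p.1 p.2) (Finset.mem_univ (x, y))
  obtain ⟨D, hDcard, hD⟩ := Nat.sInf_mem (s := {k | ∃ D, D.card = k ∧ G.IsResolving D})
    ⟨_, _, rfl, hconn.preconnected.isResolving_univ⟩
  obtain ⟨Q, hQcard, hQ⟩ := Nat.sInf_mem (s := {t | ∃ Q, Q.card = t ∧ G.IsBallSeparating Q})
    ⟨_, _, rfl, hD.isBallSeparating_product_range hdiam⟩
  constructor
  · calc _ ≤ (Q.image Prod.fst).card :=
          Nat.sInf_le (by exact ⟨_, rfl, hQ.isResolving_image_fst⟩)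
      _ ≤ Q.card := Finset.card_image_le
      _ = _ := hQcard
  · calc _ ≤ (D ×ˢ Finset.range diam).card :=
          Nat.sInf_le (by exact ⟨_, rfl, hD.isBallSeparating_product_range hdiam⟩)
      _ = _ := by rw [Finset.card_product, Finset.card_range, hDcard, mul_comm]
end

section
/- (Katona's separating system bound) Let X be a set of M elements and let A be a separating family of subsets of X such that every A ∈ A has |A| ≤ m, where m < M/2. Then |A| ≥ (M/m) · log_2(M) / log_2(eM/m). -/
/-!
Entropy counting. Cutting a set `S` by `B` splits `|S| log |S|` as
`|S ∩ B| log |S ∩ B| + |S \ B| log |S \ B|` plus the entropy `|S| h(|S ∩ B| / |S|)` of the cut,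
where `h` is the binary entropy. Induction on the family, together with the superadditivity of
`(x, y) ↦ (x + y) h(x / (x + y))` (the perspective of the concave `h`), gives
`M log M ≤ ∑_{B ∈ A} M h(|B| / M)` for a separating family `A`. Each term is at most
`|B| log (eM / |B|) ≤ m log (eM / m)`, since `b ↦ b log (eM / b)` increases on `[0, M]`.
-/

open Finset Real

theorem ConcaveOn.mul_apply_div_add_mul_apply_div_le {s : Set ℝ} {f : ℝ → ℝ}
    (hf : ConcaveOn ℝ s f) {x y u v : ℝ} (hu : 0 < u) (hv : 0 < v)
    (hx : x / u ∈ s) (hy : y / v ∈ s) :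
    u * f (x / u) + v * f (y / v) ≤ (u + v) * f ((x + y) / (u + v)) := by
  have huv : 0 < u + v := add_pos hu hv
  have hw : u / (u + v) + v / (u + v) = 1 := by rw [← add_div, div_self huv.ne']
  have hconv : u / (u + v) * f (x / u) + v / (u + v) * f (y / v) ≤
      f (u / (u + v) * (x / u) + v / (u + v) * (y / v)) := by
    simpa only [smul_eq_mul] using hf.2 hx hy (div_pos hu huv).le (div_pos hv huv).le hw
  have harg : u / (u + v) * (x / u) + v / (u + v) * (y / v) = (x + y) / (u + v) := by
    field_simp
  rw [harg] at hconv
  calc u * f (x / u) + v * f (y / v)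
      = (u + v) * (u / (u + v) * f (x / u) + v / (u + v) * f (y / v)) := by
        field_simp
    _ ≤ (u + v) * f ((x + y) / (u + v)) := mul_le_mul_of_nonneg_left hconv huv.le

noncomputable def pairEntropy (x y : ℝ) : ℝ :=
  negMulLog x + negMulLog y - negMulLog (x + y)

theorem pairEntropy_eq_mul_negMulLog_add {x y : ℝ} (hxy : x + y ≠ 0) :
    pairEntropy x y = (x + y) * negMulLog (x / (x + y)) + (x + y) * negMulLog (y / (x + y)) := by
  have hscale : ∀ t, negMulLog t =
      t / (x + y) * negMulLog (x + y) + (x + y) * negMulLog (t / (x + y)) :=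
    fun t => by rw [← negMulLog_mul, mul_div_cancel₀ t hxy]
  rw [pairEntropy, hscale x, hscale y]
  field_simp
  ring

theorem pairEntropy_add_le {x₁ y₁ x₂ y₂ : ℝ} (hx₁ : 0 ≤ x₁) (hy₁ : 0 ≤ y₁) (hx₂ : 0 ≤ x₂)
    (hy₂ : 0 ≤ y₂) : pairEntropy x₁ y₁ + pairEntropy x₂ y₂ ≤ pairEntropy (x₁ + x₂) (y₁ + y₂) := by
  rcases (add_nonneg hx₁ hy₁).eq_or_lt with h₁ | h₁
  · obtain ⟨rfl, rfl⟩ : x₁ = 0 ∧ y₁ = 0 := ⟨by linarith, by linarith⟩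
    simp [pairEntropy]
  rcases (add_nonneg hx₂ hy₂).eq_or_lt with h₂ | h₂
  · obtain ⟨rfl, rfl⟩ : x₂ = 0 ∧ y₂ = 0 := ⟨by linarith, by linarith⟩
    simp [pairEntropy]
  have hsum : x₁ + x₂ + (y₁ + y₂) = x₁ + y₁ + (x₂ + y₂) := by ring
  rw [pairEntropy_eq_mul_negMulLog_add h₁.ne', pairEntropy_eq_mul_negMulLog_add h₂.ne',
    pairEntropy_eq_mul_negMulLog_add (by linarith), hsum]
  have hx := concaveOn_negMulLog.mul_apply_div_add_mul_apply_div_le h₁ h₂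
    (div_nonneg hx₁ h₁.le) (div_nonneg hx₂ h₂.le)
  have hy := concaveOn_negMulLog.mul_apply_div_add_mul_apply_div_le h₁ h₂
    (div_nonneg hy₁ h₁.le) (div_nonneg hy₂ h₂.le)
  linarith

theorem pairEntropy_le_mul_log {x y : ℝ} (hx : 0 ≤ x) (hy : 0 ≤ y) :
    pairEntropy x y ≤ x * log (exp 1 * (x + y) / x) := by
  rcases hx.eq_or_lt with rfl | hx
  · simp [pairEntropy]
  have hs : 0 < x + y := by linarith
  have hfirst : (x + y) * negMulLog (x / (x + y)) = x * log ((x + y) / x) := by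
    rw [negMulLog, ← inv_div, log_inv]
    field_simp
  have hsecond : (x + y) * negMulLog (y / (x + y)) ≤ x := by
    have := negMulLog_le_one_sub_self (div_nonneg hy hs.le)
    calc (x + y) * negMulLog (y / (x + y)) ≤ (x + y) * (1 - y / (x + y)) :=
          mul_le_mul_of_nonneg_left this hs.le
      _ = x := by field_simp; ring
  have hlog : log (exp 1 * (x + y) / x) = 1 + log ((x + y) / x) := by
    rw [mul_div_assoc, log_mul (exp_ne_zero 1) (by positivity), log_exp]
  rw [pairEntropy_eq_mul_negMulLog_add hs.ne', hfirst, hlog]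
  linarith

theorem one_le_log_exp_mul_div {m M : ℝ} (hm : 0 < m) (hmM : m ≤ M) :
    1 ≤ log (exp 1 * M / m) := by
  rw [le_log_iff_exp_le (by have := hm.trans_le hmM; positivity), le_div_iff₀ hm]
  exact mul_le_mul_of_nonneg_left hmM (exp_pos 1).le

theorem mul_log_exp_mul_div_le {b m M : ℝ} (hb : 0 ≤ b) (hbm : b ≤ m) (hmM : m ≤ M) :
    b * log (exp 1 * M / b) ≤ m * log (exp 1 * M / m) := by
  rcases hb.eq_or_lt with rfl | hb
  · rcases hbm.eq_or_lt with rfl | hm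
    · simp
    · simpa using mul_nonneg hm.le (zero_le_one.trans (one_le_log_exp_mul_div hm hmM))
  have hm : 0 < m := hb.trans_le hbm
  set L := log (exp 1 * M / m)
  have hL : 1 ≤ L := one_le_log_exp_mul_div hm hmM
  have hsplit : log (exp 1 * M / b) = L + log (m / b) := by
    have hM : 0 < M := hm.trans_le hmM
    rw [← log_mul (by positivity) (by positivity)]
    field_simp
  have hratio : b * log (m / b) ≤ m - b := by
    calc b * log (m / b) ≤ b * (m / b - 1) :=
          mul_le_mul_of_nonneg_left (log_le_sub_one_of_pos (by positivity)) hb.le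
      _ = m - b := by field_simp
  calc b * log (exp 1 * M / b) = b * L + b * log (m / b) := by rw [hsplit]; ring
    _ ≤ b * L + (m - b) * L := by
      linarith [le_mul_of_one_le_right (sub_nonneg.2 hbm) hL]
    _ = m * L := by ring

section Separating

variable {α : Type*} [DecidableEq α]

noncomputable def splitEntropy (T C : Finset α) : ℝ :=
  pairEntropy #(T ∩ C) #(T \ C)

theorem splitEntropy_inter_add_splitEntropy_sdiff_le (T B C : Finset α) :
    splitEntropy (T ∩ B) C + splitEntropy (T \ B) C ≤ splitEntropy T C := by
  have hin : (#(T ∩ B ∩ C) : ℝ) + #((T \ B) ∩ C) = #(T ∩ C) := by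
    rw [inter_right_comm, sdiff_inter_right_comm]
    exact_mod_cast card_inter_add_card_sdiff (T ∩ C) B
  have hout : (#((T ∩ B) \ C) : ℝ) + #((T \ B) \ C) = #(T \ C) := by
    rw [sdiff_sdiff_comm, ← sdiff_inter_right_comm]
    exact_mod_cast card_inter_add_card_sdiff (T \ C) B
  rw [splitEntropy, splitEntropy, splitEntropy, ← hin, ← hout]
  exact pairEntropy_add_le (by positivity) (by positivity) (by positivity) (by positivity)

def IsSeparatingOn (A : Finset (Finset α)) (S : Set α) : Prop :=
  S.Pairwise fun x y => ∃ B ∈ A, (x ∈ B ↔ y ∉ B)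

theorem IsSeparatingOn.of_insert {A : Finset (Finset α)} {B : Finset α} {S T : Set α}
    (h : IsSeparatingOn (insert B A) S) (hTS : T ⊆ S) (hB : ∀ x ∈ T, ∀ y ∈ T, (x ∈ B ↔ y ∈ B)) :
    IsSeparatingOn A T := by
  intro x hx y hy hxy
  obtain ⟨C, hC, hxyC⟩ := h (hTS hx) (hTS hy) hxy
  rcases mem_insert.1 hC with rfl | hC
  · exact absurd (hB x hx y hy) (by tauto)
  · exact ⟨C, hC, hxyC⟩

theorem IsSeparatingOn.mul_log_card_le_sum_splitEntropy {A : Finset (Finset α)} {S : Finset α}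
    (h : IsSeparatingOn A S) : (#S : ℝ) * log #S ≤ ∑ B ∈ A, splitEntropy S B := by
  induction A using Finset.induction_on generalizing S with
  | empty =>
    have hS : #S ≤ 1 := card_le_one.2 fun x hx y hy => by
      by_contra hxy
      simpa using h hx hy hxy
    interval_cases #S <;> simp
  | @insert B A hB ih =>
    have hin := ih (S := S ∩ B) (h.of_insert (by simp) (by simp +contextual))
    have hout := ih (S := S \ B) (h.of_insert (by simp) (by simp +contextual))
    have hsplit : (#S : ℝ) * log #S =
        #(S ∩ B) * log #(S ∩ B) + #(S \ B) * log #(S \ B) + splitEntropy S B := by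
      rw [splitEntropy, pairEntropy, ← card_inter_add_card_sdiff S B]
      push_cast
      simp only [negMulLog]
      ring
    calc (#S : ℝ) * log #S
        ≤ ∑ C ∈ A, splitEntropy (S ∩ B) C + ∑ C ∈ A, splitEntropy (S \ B) C +
            splitEntropy S B := by rw [hsplit]; gcongr
      _ ≤ ∑ C ∈ A, splitEntropy S C + splitEntropy S B := by
        rw [← sum_add_distrib]
        gcongr with C
        exact splitEntropy_inter_add_splitEntropy_sdiff_le S B C
      _ = ∑ C ∈ insert B A, splitEntropy S C := by rw [sum_insert hB, add_comm]

end Separating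

theorem katona_separating_bound_general {α : Type*} [Fintype α]
    (m : ℕ) (A : Finset (Finset α))
    (hsep : ∀ x y : α, x ≠ y → ∃ B ∈ A, (x ∈ B ↔ y ∉ B))
    (hsize : ∀ B ∈ A, B.card ≤ m)
    (hm : (m : ℝ) < (Fintype.card α : ℝ) / 2) :
    ((Fintype.card α : ℝ) / m) * Real.logb 2 (Fintype.card α) /
        Real.logb 2 (Real.exp 1 * (Fintype.card α) / m) ≤ (A.card : ℝ) := by
  classical
  set M : ℝ := (Fintype.card α : ℝ)
  rcases (Nat.cast_nonneg m : (0 : ℝ) ≤ m).eq_or_lt with hm0 | hm0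
  · simp [← hm0] -- the left side is a junk `M / 0 * _ = 0`
  have hmM : (m : ℝ) ≤ M := by linarith
  set L := log (exp 1 * M / m)
  have hL : 0 < L := zero_lt_one.trans_le (one_le_log_exp_mul_div hm0 hmM)
  have hentropy : M * log M ≤ ∑ B ∈ A, splitEntropy univ B := by
    simpa using IsSeparatingOn.mul_log_card_le_sum_splitEntropy (S := univ)
      fun x _ y _ hxy => hsep x y hxy
  have hterm : ∀ B ∈ A, splitEntropy univ B ≤ m * L := fun B hB => by
    have hcard : (#(univ ∩ B) : ℝ) + #(univ \ B) = M := by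
      rw [← Nat.cast_add, card_inter_add_card_sdiff, card_univ]
    calc splitEntropy univ B ≤ #(univ ∩ B) * log (exp 1 * M / #(univ ∩ B)) := by
          rw [splitEntropy, ← hcard]
          exact pairEntropy_le_mul_log (by positivity) (by positivity)
      _ ≤ m * L := mul_log_exp_mul_div_le (by positivity)
          (by simpa using hsize B hB) hmM
  have hbound : M * log M ≤ #A * (m * L) := by
    simpa using hentropy.trans (sum_le_card_nsmul A _ _ hterm)
  rw [logb, logb, mul_div_assoc', div_div_div_cancel_right₀ (log_pos one_lt_two).ne',
    div_le_iff₀ hL, div_mul_eq_mul_div, div_le_iff₀ hm0]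
  linarith

/-- Katona's separating system bound: if `A` is a separating family of subsets of an
`M`-element set all of whose members have size at most `m < M/2`, then
`|A| ≥ (M/m) · log₂ M / log₂ (eM/m)`. -/
theorem katona_separating_bound {α : Type*} [Fintype α] [DecidableEq α]
    (m : ℕ) (A : Finset (Finset α))
    (hsep : ∀ x y : α, x ≠ y → ∃ B ∈ A, (x ∈ B ↔ y ∉ B))
    (hsize : ∀ B ∈ A, B.card ≤ m)
    (hm : (m : ℝ) < (Fintype.card α : ℝ) / 2) :
    ((Fintype.card α : ℝ) / m) * Real.logb 2 (Fintype.card α) /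
        Real.logb 2 (Real.exp 1 * (Fintype.card α) / m) ≤ (A.card : ℝ) :=
  katona_separating_bound_general m A hsep hsize hm
end
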